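/- arXiv:2512.03738 — 3 statements merged into one kernel-verified Lean document; each statement's English description precedes it below -/
import Mathlib

section
/- Let I be a finite index set, let w : I → ℝ with w i ≥ 0 for all i, let s : I → ℝ with s i ≥ 0 for all i, and let m ∈ ℝ. Define the calibration p-value p_ca(t) = Σ_{i ∈ I} w i · 1{|t − m| ≤ s i}. Then p_ca is quasi-concave on ℝ: for every c ∈ ℝ, the superlevel set {t ∈ ℝ : p_ca(t) ≥ c} is a convex subset of ℝ. -/
/-- Calibration part of Proposition 1: the calibration p-value
`p_ca(t) = ∑ i, w i · 1{|t − m| ≤ s i}` with nonnegative weights and radii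
is quasi-concave: every superlevel set is convex. -/
theorem scp_calibration_pvalue_quasiconcave
    {I : Type*} [Fintype I] (w s : I → ℝ)
    (hw : ∀ i, 0 ≤ w i) (hs : ∀ i, 0 ≤ s i) (m : ℝ) (c : ℝ) :
    Convex ℝ {t : ℝ |
      (∑ i : I, w i * (if |t - m| ≤ s i then (1 : ℝ) else 0)) ≥ c} := by
  have mono : ∀ u v : ℝ, |u - m| ≤ |v - m| →
      (∑ i : I, w i * (if |v - m| ≤ s i then (1 : ℝ) else 0)) ≤
      (∑ i : I, w i * (if |u - m| ≤ s i then (1 : ℝ) else 0)) := by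
    intro u v huv
    apply Finset.sum_le_sum
    intro i _
    by_cases h : |v - m| ≤ s i
    · simp [h, huv.trans h]
    · have : (0:ℝ) ≤ (if |u - m| ≤ s i then (1:ℝ) else 0) := by positivity
      simp only [h, if_false, mul_zero]
      exact mul_nonneg (hw i) this
  intro x hx y hy a b ha hb hab
  simp only [Set.mem_setOf_eq, smul_eq_mul] at *
  have hz : |a * x + b * y - m| ≤ max |x - m| |y - m| := by
    have : a * x + b * y - m = a * (x - m) + b * (y - m) := by linear_combination m * hab
    rw [this]
    calc |a * (x - m) + b * (y - m)| ≤ a * |x - m| + b * |y - m| := by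
          refine (abs_add_le _ _).trans ?_
          rw [abs_mul, abs_mul, abs_of_nonneg ha, abs_of_nonneg hb]
      _ ≤ a * max |x - m| |y - m| + b * max |x - m| |y - m| := by
          gcongr
          · exact le_max_left _ _
          · exact le_max_right _ _
      _ = max |x - m| |y - m| := by rw [← add_mul, hab, one_mul]
  rcases max_cases |x - m| |y - m| with ⟨hm, _⟩ | ⟨hm, _⟩
  · exact le_trans hx (mono _ x (le_of_le_of_eq hz hm))
  · exact le_trans hy (mono _ y (le_of_le_of_eq hz hm))
end

section
/- Let I be a finite index set, let w : I → ℝ with w i ≥ 0 for all i, let s : I → ℝ with s i ≥ 0 for all i, and let m ∈ ℝ. Define the calibration p-value p_ca(t) = Σ_{i ∈ I} w i · 1{|t − m| ≤ s i}. Then for every c ∈ ℝ with 0 < c ≤ Σ_{i ∈ I} w i, there exists s̄ ≥ 0 such that {t ∈ ℝ : p_ca(t) ≥ c} = [m − s̄, m + s̄], a closed interval symmetric about m. -/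
/-- Symmetric-interval form of the superlevel sets of the calibration p-value:
for `0 < c ≤ ∑ w i` there exists `s̄ ≥ 0` with
`{t : p_ca(t) ≥ c} = [m − s̄, m + s̄]`. -/
theorem scp_calibration_superlevel_symmetric_interval
    {I : Type*} [Fintype I] (w s : I → ℝ)
    (hw : ∀ i, 0 ≤ w i) (hs : ∀ i, 0 ≤ s i) (m : ℝ) (c : ℝ)
    (hc : 0 < c) (hc' : c ≤ ∑ i : I, w i) :
    ∃ sbar : ℝ, 0 ≤ sbar ∧
      {t : ℝ | (∑ i : I, w i * (if |t - m| ≤ s i then (1 : ℝ) else 0)) ≥ c}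
        = Set.Icc (m - sbar) (m + sbar) := by
  classical
  let f : ℝ → ℝ := fun r => ∑ i : I, w i * (if r ≤ s i then (1 : ℝ) else 0)
  have fmono : ∀ {r r' : ℝ}, r ≤ r' → f r' ≤ f r := by
    intro r r' h
    apply Finset.sum_le_sum
    intro i _
    apply mul_le_mul_of_nonneg_left _ (hw i)
    by_cases h' : r' ≤ s i
    · simp [h', le_trans h h']
    · simp only [h', if_false]
      split <;> norm_num
  have f0 : c ≤ f 0 := by
    have : f 0 = ∑ i : I, w i := Finset.sum_congr rfl (fun i _ => by simp [hs i])
    rw [this]; exact hc'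
  let T : Finset ℝ := (insert 0 (Finset.image s Finset.univ)).filter (fun r => c ≤ f r)
  have h0T : (0 : ℝ) ∈ T := by
    simp [T, f0]
  have hTne : T.Nonempty := ⟨0, h0T⟩
  refine ⟨T.max' hTne, T.le_max' _ h0T, ?_⟩
  set sbar := T.max' hTne with hsbar
  have hfc : c ≤ f sbar := by
    have := T.max'_mem hTne
    exact (Finset.mem_filter.mp this).2
  have key : ∀ r : ℝ, c ≤ f r ↔ r ≤ sbar := by
    intro r
    constructor
    · intro hr
      set J : Finset I := Finset.univ.filter (fun i => r ≤ s i) with hJ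
      have hJne : J.Nonempty := by
        by_contra hne
        have hJe : J = ∅ := Finset.not_nonempty_iff_eq_empty.mp hne
        have : f r = 0 := by
          apply Finset.sum_eq_zero
          intro i _
          have : ¬ r ≤ s i := by
            intro hri
            have : i ∈ J := by simp [hJ, hri]
            simp [hJe] at this
          simp [this]
        linarith
      obtain ⟨i0, hi0J, hmin⟩ := Finset.exists_min_image J s hJne
      have hri0 : r ≤ s i0 := (Finset.mem_filter.mp hi0J).2
      have heq : f (s i0) = f r := by
        apply Finset.sum_congr rfl
        intro i _
        congr 1
        by_cases hi : r ≤ s i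
        · have : i ∈ J := by simp [hJ, hi]
          simp [hi, hmin i this]
        · have : ¬ s i0 ≤ s i := fun h => hi (le_trans hri0 h)
          simp [hi, this]
      have hmem : s i0 ∈ T := by
        refine Finset.mem_filter.mpr ⟨?_, by rw [heq]; exact hr⟩
        exact Finset.mem_insert_of_mem (Finset.mem_image_of_mem s (Finset.mem_univ i0))
      exact le_trans hri0 (T.le_max' _ hmem)
    · intro hr
      exact le_trans hfc (fmono hr)
  ext t
  simp only [Set.mem_setOf_eq, Set.mem_Icc, ge_iff_le]
  have := key |t - m|
  constructor
  · intro ht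
    have h' : |t - m| ≤ sbar := this.mp ht
    rw [abs_le] at h'
    constructor <;> linarith [h'.1, h'.2]
  · intro ht
    apply this.mpr
    rw [abs_le]
    constructor <;> linarith [ht.1, ht.2]
end

section
/- (Proposition 1, full p-value with t-independent test weight.) Let a ≤ b be real numbers with m = (a + b)/2, let I be a finite index set, let w : I → ℝ with w i ≥ 0 and calibration scores R : I → ℝ with R i ≥ 0 for all i, let v ≥ 0 be the test-point weight, and set S = Σ_{i ∈ I} w i with S + v > 0. Define the SCP p-value p(t) = (Σ_{i ∈ I} w i · 1{R i ≥ max(a − t, t − b)} + v) / (S + v). Then p is quasi-concave on ℝ: every superlevel set {t : p(t) ≥ c} is convex, and consequently for every α ∈ (0, 1) the prediction set Ĉ = {t ∈ ℝ : p(t) > α} is a convex subset of ℝ, i.e., a single connected interval. -/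
/-! The p-value is a nonincreasing function of the test score `max (a - t) (t - b)`, each
indicator `1{s ≤ R i}` being nonincreasing in `s` and the weights nonnegative; the score is a
maximum of two affine functions of `t`, hence convex. A nonincreasing function of a convex
function is quasiconcave, so its superlevel sets, strict or not, are intervals. -/

open Set

lemma convexOn_max_sub_sub (a b : ℝ) : ConvexOn ℝ univ fun t : ℝ => max (a - t) (t - b) :=
  ((convexOn_const a convex_univ).sub (concaveOn_id convex_univ)).sup
    ((convexOn_id convex_univ).sub (concaveOn_const b convex_univ))

lemma antitone_ite_le_one_zero (r : ℝ) : Antitone fun s : ℝ => if s ≤ r then (1 : ℝ) else 0 := by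
  intro x y hxy
  by_cases hy : y ≤ r
  · simp [hy, hxy.trans hy]
  · by_cases hx : x ≤ r <;> simp [hx, hy]

lemma antitone_weighted_count_le {I : Type*} [Fintype I] (w R : I → ℝ) (hw : ∀ i, 0 ≤ w i) :
    Antitone fun s : ℝ => ∑ i, w i * if s ≤ R i then (1 : ℝ) else 0 :=
  fun _ _ hxy => Finset.sum_le_sum fun i _ =>
    mul_le_mul_of_nonneg_left (antitone_ite_le_one_zero (R i) hxy) (hw i)

theorem scp_full_pvalue_quasiconcave_general
    (a b : ℝ)
    {I : Type*} [Fintype I] (w R : I → ℝ)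
    (hw : ∀ i, 0 ≤ w i)
    (v : ℝ)
    (S : ℝ) (hSv : 0 < S + v) :
    (∀ c : ℝ, Convex ℝ {t : ℝ |
      (∑ i : I, w i * (if max (a - t) (t - b) ≤ R i then (1 : ℝ) else 0) + v)
        / (S + v) ≥ c}) ∧
    (∀ α : ℝ, 0 < α → α < 1 → Convex ℝ {t : ℝ |
      (∑ i : I, w i * (if max (a - t) (t - b) ≤ R i then (1 : ℝ) else 0) + v)
        / (S + v) > α}) := by
  have hp : Antitone fun s : ℝ => (∑ i, w i * (if s ≤ R i then (1 : ℝ) else 0) + v) / (S + v) :=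
    fun _ _ hxy => div_le_div_of_nonneg_right
      (add_le_add_left (antitone_weighted_count_le w R hw hxy) v) hSv.le
  have hq := (convexOn_max_sub_sub a b).quasiconvexOn.antitone_comp hp
  refine ⟨fun c => ?_, fun α _ _ => ?_⟩
  · simpa using hq c
  · simpa using hq.convex_gt α

/-- Proposition 1 (full SCP p-value with t-independent test weight): the
normalized p-value
`p(t) = (∑ i, w i · 1{R i ≥ max(a − t, t − b)} + v)/(S + v)`
is quasi-concave (every superlevel set is convex), and consequently, for every
`α ∈ (0, 1)`, the prediction set `{t : p(t) > α}` is convex, i.e., a single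
connected interval. -/
theorem scp_full_pvalue_quasiconcave
    (a b : ℝ) (hab : a ≤ b) (m : ℝ) (hm : m = (a + b) / 2)
    {I : Type*} [Fintype I] (w R : I → ℝ)
    (hw : ∀ i, 0 ≤ w i) (hR : ∀ i, 0 ≤ R i)
    (v : ℝ) (hv : 0 ≤ v)
    (S : ℝ) (hS : S = ∑ i : I, w i) (hSv : 0 < S + v) :
    (∀ c : ℝ, Convex ℝ {t : ℝ |
      (∑ i : I, w i * (if max (a - t) (t - b) ≤ R i then (1 : ℝ) else 0) + v)
        / (S + v) ≥ c}) ∧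
    (∀ α : ℝ, 0 < α → α < 1 → Convex ℝ {t : ℝ |
      (∑ i : I, w i * (if max (a - t) (t - b) ≤ R i then (1 : ℝ) else 0) + v)
        / (S + v) > α}) :=
  scp_full_pvalue_quasiconcave_general a b w R hw v S hSv
end
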